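/- arXiv:2501.04011 — 2 statements merged into one kernel-verified Lean document; each statement's English description precedes it below -/
import Mathlib

section
/- Let G = (V, E) be a graph and let B be a family of pairwise-disjoint vertex sets covering V, produced by recursive separator decomposition: each non-leaf node i has vertex set equal to a separator of the subgraph it was called on, and the two subtrees rooted at 2i+1 and 2i+2 decompose the two separated parts. Then for any edge {u, v} ∈ E, the tree nodes containing u and v are in ancestor-descendant relation in the binary tree (one of them is an ancestor of the other, or they coincide). -/
/-- `Desc i j`: node `j` is a descendant of node `i` (or `j = i`) in the
array-stored binary tree where the children of node `k` are `2k+1` and `2k+2`. -/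
inductive Desc : ℕ → ℕ → Prop
  | refl (i : ℕ) : Desc i i
  | left {i j : ℕ} : Desc i j → Desc i (2 * j + 1)
  | right {i j : ℕ} : Desc i j → Desc i (2 * j + 2)

/-- `SepDecomp G B i U`: calling the recursive separator decomposition at tree
index `i` on vertex set `U` produces the assignment `B` on the subtree of `i`:
either `i` is a leaf holding all of `U`, or `U` splits into pairwise-disjoint
sets `S`, `L`, `R` with no edge joining `L` to `R`, node `i` holds the
separator `S`, and the subtrees rooted at `2i+1` and `2i+2` decompose `L` and
`R`. -/
inductive SepDecomp {V : Type*} (G : SimpleGraph V) (B : ℕ → Set V) :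
    ℕ → Set V → Prop
  | leaf (i : ℕ) (U : Set V) : B i = U → SepDecomp G B i U
  | node (i : ℕ) (U S L R : Set V) :
      S ∪ L ∪ R = U →
      Disjoint S L → Disjoint S R → Disjoint L R →
      (∀ u ∈ L, ∀ v ∈ R, ¬ G.Adj u v) →
      B i = S →
      SepDecomp G B (2 * i + 1) L →
      SepDecomp G B (2 * i + 2) R →
      SepDecomp G B i U

theorem Desc.trans' {i j k : ℕ} (h1 : Desc i j) (h2 : Desc j k) : Desc i k := by
  induction h2 with
  | refl => exact h1
  | left _ ih => exact ih.left
  | right _ ih => exact ih.right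

theorem SepDecomp.cover {V : Type*} {G : SimpleGraph V} {B : ℕ → Set V} {k : ℕ} {U : Set V}
    (h : SepDecomp G B k U) : ∀ u ∈ U, ∃ m, Desc k m ∧ u ∈ B m := by
  induction h with
  | leaf i U hB => exact fun u hu => ⟨i, Desc.refl i, hB ▸ hu⟩
  | node i U S L R hU hSL hSR hLR hadj hB hL hR ihL ihR =>
    intro u hu
    rw [← hU] at hu
    rcases hu with (hu | hu) | hu
    · exact ⟨i, Desc.refl i, hB ▸ hu⟩
    · obtain ⟨m, hm, hum⟩ := ihL u hu
      exact ⟨m, Desc.trans' (Desc.left (Desc.refl i)) hm, hum⟩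
    · obtain ⟨m, hm, hum⟩ := ihR u hu
      exact ⟨m, Desc.trans' (Desc.right (Desc.refl i)) hm, hum⟩

theorem stmt4_key {V : Type*} {G : SimpleGraph V} {B : ℕ → Set V}
    (hdisj : ∀ i j, i ≠ j → Disjoint (B i) (B j))
    {k : ℕ} {U : Set V} (h : SepDecomp G B k U)
    {u v : V} (huv : G.Adj u v) :
    ∀ i j, u ∈ B i → v ∈ B j → u ∈ U → v ∈ U →
      Desc i j ∨ Desc j i := by
  have heq : ∀ {w : V} (a b : ℕ), w ∈ B a → w ∈ B b → a = b := by
    intro w a b ha hb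
    by_contra hne
    exact Set.disjoint_left.mp (hdisj a b hne) ha hb
  induction h with
  | leaf k U hB =>
    intro i j hu hv huU hvU
    have hik : i = k := heq i k hu (hB ▸ huU)
    have hjk : j = k := heq j k hv (hB ▸ hvU)
    rw [hik, hjk]
    exact Or.inl (Desc.refl k)
  | node k U S L R hU hSL hSR hLR hadj hB hL hR ihL ihR =>
    intro i j hu hv huU hvU
    rw [← hU] at huU hvU
    rcases huU with (huS | huL) | huR
    · -- u in separator: i = k, so Desc i j iff we find Desc k j
      have hik : i = k := heq i k hu (hB ▸ huS)
      subst hik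
      rcases hvU with (hvS | hvL) | hvR
      · have : j = i := heq j i hv (hB ▸ hvS)
        exact Or.inl (this ▸ Desc.refl j)
      · obtain ⟨m, hm, hvm⟩ := hL.cover v hvL
        have : j = m := heq j m hv hvm
        exact Or.inl (this ▸ Desc.trans' (Desc.left (Desc.refl i)) hm)
      · obtain ⟨m, hm, hvm⟩ := hR.cover v hvR
        have : j = m := heq j m hv hvm
        exact Or.inl (this ▸ Desc.trans' (Desc.right (Desc.refl i)) hm)
    · rcases hvU with (hvS | hvL) | hvR
      · have hjk : j = k := heq j k hv (hB ▸ hvS)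
        subst hjk
        obtain ⟨m, hm, hum⟩ := hL.cover u huL
        have : i = m := heq i m hu hum
        exact Or.inr (this ▸ Desc.trans' (Desc.left (Desc.refl j)) hm)
      · exact ihL i j hu hv huL hvL
      · exact absurd huv (hadj u huL v hvR)
    · rcases hvU with (hvS | hvL) | hvR
      · have hjk : j = k := heq j k hv (hB ▸ hvS)
        subst hjk
        obtain ⟨m, hm, hum⟩ := hR.cover u huR
        have : i = m := heq i m hu hum
        exact Or.inr (this ▸ Desc.trans' (Desc.right (Desc.refl j)) hm)
      · exact absurd huv.symm (hadj v hvL u huR)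
      · exact ihR i j hu hv huR hvR

/-- If the family `B` of pairwise-disjoint vertex sets is
produced by recursive separator decomposition of the whole vertex set starting
at the root (index 0), then for any edge `{u,v}` of `G`, the tree nodes
containing `u` and `v` are in ancestor-descendant relation (one is an ancestor
of the other, or they coincide). -/
theorem stmt4 {V : Type*} (G : SimpleGraph V) (B : ℕ → Set V)
    (hdisj : ∀ i j, i ≠ j → Disjoint (B i) (B j))
    (hdec : SepDecomp G B 0 Set.univ)
    (u v : V) (huv : G.Adj u v)
    (i j : ℕ) (hi : Desc 0 i) (hj : Desc 0 j)
    (hu : u ∈ B i) (hv : v ∈ B j) :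
    Desc i j ∨ Desc j i := by
  exact stmt4_key hdisj hdec huv i j hu hv (Set.mem_univ u) (Set.mem_univ v)
end

section
/- Let T be a binary tree with disjoint vertex sets B[i].nodes at its nodes, valid as a separator decomposition for a graph G. Let u ∈ B[i].nodes and v ∈ B[j].nodes with i and j not in ancestor-descendant relation, and let a be the lowest common ancestor of i and j. If the decomposition is modified only within the subtree rooted at a (the union of vertex sets over the subtree of a is re-partitioned into a new valid separator decomposition of the induced subgraph on that union, including the new edge {u,v}), then the resulting tree is a valid separator decomposition for G together with the added edge {u, v}. -/
/-- `B` is a valid separator decomposition for `G`: every edge of `G` joins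
tree nodes of `B` that are equal or in ancestor-descendant relation. -/
def ValidDecomp {V : Type*} (G : SimpleGraph V) (B : ℕ → Set V) : Prop :=
  ∀ u v : V, G.Adj u v → ∀ i j : ℕ, u ∈ B i → v ∈ B j → Desc i j ∨ Desc j i

theorem desc_trans {a b c : ℕ} (h1 : Desc a b) (h2 : Desc b c) : Desc a c := by
  induction h2 with
  | refl => exact h1
  | left _ ih => exact ih.left
  | right _ ih => exact ih.right

theorem desc_child_inv {a m : ℕ} (h : Desc a m) :
    ∀ j, m = 2 * j + 1 ∨ m = 2 * j + 2 → a = m ∨ Desc a j := by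
  cases h with
  | refl => exact fun _ _ => Or.inl rfl
  | @left j' h' =>
    intro j hj
    right; obtain rfl : j' = j := by omega
    exact h'
  | @right j' h' =>
    intro j hj
    right; obtain rfl : j' = j := by omega
    exact h'

theorem desc_total {a l m : ℕ} (h1 : Desc a m) (h2 : Desc l m) : Desc a l ∨ Desc l a := by
  induction h2 generalizing a with
  | refl => exact Or.inl h1
  | @left j h' ih =>
    rcases desc_child_inv h1 j (Or.inl rfl) with rfl | h1'
    · exact Or.inr h'.left
    · exact ih h1'
  | @right j h' ih =>
    rcases desc_child_inv h1 j (Or.inr rfl) with rfl | h1'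
    · exact Or.inr h'.right
    · exact ih h1'

/-- Let `B` (disjoint vertex sets on a binary tree) be a
valid separator decomposition for `G`.  Let `u ∈ B i`, `v ∈ B j` with `i, j`
not in ancestor-descendant relation, let `a` be the lowest common ancestor of
`i` and `j`, and let `G'` be `G` together with the added edge `{u,v}`.  If the
decomposition is modified only within the subtree rooted at `a` — the union of
the vertex sets over the subtree of `a` is re-partitioned into a new
decomposition that is valid for the induced subgraph on that union including
the new edge — then the resulting tree `B'` is a valid separator decomposition
for `G'`. -/
theorem stmt14 {V : Type*} (G G' : SimpleGraph V) (B B' : ℕ → Set V)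
    (u v : V) (huv : u ≠ v) (i j a : ℕ)
    (hdisj : ∀ k l, k ≠ l → Disjoint (B k) (B l))
    (hdisj' : ∀ k l, k ≠ l → Disjoint (B' k) (B' l))
    (hvalid : ValidDecomp G B)
    (hu : u ∈ B i) (hv : v ∈ B j)
    (hij : ¬ Desc i j) (hji : ¬ Desc j i)
    (hai : Desc a i) (haj : Desc a j)
    (hlca : ∀ b : ℕ, Desc b i → Desc b j → Desc b a)
    (hG' : ∀ x y : V, G'.Adj x y ↔
      G.Adj x y ∨ (x = u ∧ y = v) ∨ (x = v ∧ y = u))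
    -- the decomposition is unchanged outside the subtree rooted at `a`:
    (houtside : ∀ k : ℕ, ¬ Desc a k → B' k = B k)
    -- the union over the subtree of `a` is re-partitioned (same union):
    (hunion : (⋃ k ∈ {k : ℕ | Desc a k}, B' k) = ⋃ k ∈ {k : ℕ | Desc a k}, B k)
    -- the new subtree decomposition is valid for the induced subgraph on that
    -- union, including the new edge {u,v}:
    (hsubvalid : ∀ x y : V, G'.Adj x y →
      x ∈ (⋃ k ∈ {k : ℕ | Desc a k}, B k) →
      y ∈ (⋃ k ∈ {k : ℕ | Desc a k}, B k) →
      ∀ k l : ℕ, Desc a k → Desc a l → x ∈ B' k → y ∈ B' l →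
        Desc k l ∨ Desc l k) :
    ValidDecomp G' B' := by
  intro x y hxy k l hxk hyl
  have hsame : ∀ (w : V) (p q : ℕ), w ∈ B p → w ∈ B q → p = q := by
    intro w p q hp hq
    by_contra h
    exact Set.disjoint_left.mp (hdisj p q h) hp hq
  have hmemU : ∀ (z : V) (m : ℕ), Desc a m → z ∈ B' m →
      z ∈ ⋃ n ∈ {n : ℕ | Desc a n}, B n := by
    intro z m hm hzm
    rw [← hunion]
    exact Set.mem_biUnion hm hzm
  -- if an endpoint lies in an unchanged (outside) node, the edge is an old edge
  have hold : ∀ (x y : V) (l : ℕ), ¬ Desc a l → y ∈ B l → G'.Adj x y → G.Adj x y := by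
    intro x y l hal hyl hxy
    rcases (hG' x y).mp hxy with h | ⟨rfl, rfl⟩ | ⟨rfl, rfl⟩
    · exact h
    · exact absurd (by rw [hsame y l j hyl hv]; exact haj) hal
    · exact absurd (by rw [hsame y l i hyl hu]; exact hai) hal
  by_cases hak : Desc a k <;> by_cases hal : Desc a l
  · exact hsubvalid x y hxy (hmemU x k hak hxk) (hmemU y l hal hyl) k l hak hal hxk hyl
  · -- k inside, l outside
    rw [houtside l hal] at hyl
    obtain ⟨m, hm, hxm⟩ := Set.mem_iUnion₂.mp (hmemU x k hak hxk)
    have hG : G.Adj x y := hold x y l hal hyl hxy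
    have hla : Desc l a := by
      rcases hvalid x y hG m l hxm hyl with hml | hlm
      · exact absurd (desc_trans hm hml) hal
      · rcases desc_total hm hlm with h | h
        · exact absurd h hal
        · exact h
    exact Or.inr (desc_trans hla hak)
  · -- l inside, k outside
    rw [houtside k hak] at hxk
    obtain ⟨m, hm, hym⟩ := Set.mem_iUnion₂.mp (hmemU y l hal hyl)
    have hG : G.Adj y x := hold y x k hak hxk hxy.symm
    have hka : Desc k a := by
      rcases hvalid y x hG m k hym hxk with hmk | hkm
      · exact absurd (desc_trans hm hmk) hak
      · rcases desc_total hm hkm with h | h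
        · exact absurd h hak
        · exact h
    exact Or.inl (desc_trans hka hal)
  · -- both outside
    rw [houtside k hak] at hxk
    rw [houtside l hal] at hyl
    exact hvalid x y (hold x y l hal hyl hxy) k l hxk hyl
end
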